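/- Let A be a vector space and α : A → A ⊗ A a linear map. Then the dual map α* : A* ⊗ A* → A* defines a left-symmetric algebra structure on A* if and only if J_α = 0, where J_α(x) = (α⊗id)α(x) - (id⊗α)α(x) - (σ⊗id)(α⊗id)α(x) + (σ⊗id)(id⊗α)α(x) for all x ∈ A. -/

import Mathlib

open TensorProduct

variable {F : Type*} [Field F] {A : Type*} [AddCommGroup A] [Module F A]

/-- The product on the dual A* induced by a comultiplication α : A → A ⊗ A:
⟨a∘b, x⟩ = ⟨a⊗b, α(x)⟩. -/
noncomputable def dualProd (α : A →ₗ[F] A ⊗[F] A)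
    (a b : Module.Dual F A) : Module.Dual F A :=
  b ∘ₗ (TensorProduct.lid F A).toLinearMap ∘ₗ (a.rTensor A) ∘ₗ α

/-- The map J_α(x) = (α⊗id)α(x) - (id⊗α)α(x) - (σ⊗id)(α⊗id)α(x) + (σ⊗id)(id⊗α)α(x),
with all terms regarded in A ⊗ (A ⊗ A) via the associator. -/
noncomputable def Jmap (α : A →ₗ[F] A ⊗[F] A) (x : A) : A ⊗[F] (A ⊗[F] A) :=
  let assoc := (TensorProduct.assoc F A A A).toLinearMap
  let swap12 : A ⊗[F] (A ⊗[F] A) →ₗ[F] A ⊗[F] (A ⊗[F] A) :=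
    assoc ∘ₗ ((TensorProduct.comm F A A).toLinearMap.rTensor A)
      ∘ₗ (TensorProduct.assoc F A A A).symm.toLinearMap
  assoc ((α.rTensor A) (α x)) - (α.lTensor A) (α x)
    - swap12 (assoc ((α.rTensor A) (α x))) + swap12 ((α.lTensor A) (α x))

/-!
Pairing `A ⊗ (A ⊗ A)` with pure tensors `a ⊗ b ⊗ c` of functionals turns each of the four
terms of `J_α(x)` into one of the four products in the left-symmetric associator identity
evaluated at `x` (the flip `σ ⊗ id` exchanging the roles of `a` and `b`). Over a field such
pure tensors separate the points of `A ⊗ (A ⊗ A)`, as the coordinate functionals of a tensor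
basis are of this form.
-/

namespace TensorProduct

open Module

section CommSemiring

variable {R M N P : Type*} [CommSemiring R] [AddCommMonoid M] [AddCommMonoid N] [AddCommMonoid P]
  [Module R M] [Module R N] [Module R P]

noncomputable def dualDistrib₃ (f : Dual R M) (g : Dual R N) (h : Dual R P) :
    Dual R (M ⊗[R] (N ⊗[R] P)) :=
  dualDistrib R M (N ⊗[R] P) (f ⊗ₜ dualDistrib R N P (g ⊗ₜ h))

theorem dualDistrib₃_tmul (f : Dual R M) (g : Dual R N) (h : Dual R P) (m : M) (v : N ⊗[R] P) :
    dualDistrib₃ f g h (m ⊗ₜ v) = f m * dualDistrib R N P (g ⊗ₜ h) v :=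
  rfl

theorem dualDistrib₃_assoc_tmul (f : Dual R M) (g : Dual R N) (h : Dual R P)
    (u : M ⊗[R] N) (p : P) :
    dualDistrib₃ f g h (TensorProduct.assoc R M N P (u ⊗ₜ p))
      = dualDistrib R M N (f ⊗ₜ g) u * h p := by
  induction u using TensorProduct.induction_on with
  | zero => simp
  | tmul m n => simp [dualDistrib₃_tmul, mul_assoc]
  | add u v hu hv => simp only [add_tmul, map_add, hu, hv, add_mul]

theorem dualDistrib₃_leftComm (f : Dual R M) (g : Dual R N) (h : Dual R P)
    (t : M ⊗[R] (N ⊗[R] P)) :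
    dualDistrib₃ g f h (leftComm R M N P t) = dualDistrib₃ f g h t := by
  induction t using TensorProduct.induction_on with
  | zero => simp
  | tmul m v =>
    induction v using TensorProduct.induction_on with
    | zero => simp
    | tmul n p => simp [dualDistrib₃_tmul, mul_left_comm]
    | add v w hv hw => simp only [tmul_add, map_add, hv, hw]
  | add t s ht hs => simp only [map_add, ht, hs]

theorem _root_.Module.Basis.tensorProduct_coord {ι κ : Type*} (b : Basis ι R M) (c : Basis κ R N)
    (i : ι) (j : κ) :
    (b.tensorProduct c).coord (i, j) = dualDistrib R M N (b.coord i ⊗ₜ c.coord j) := by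
  refine (b.tensorProduct c).ext fun ⟨i', j'⟩ => ?_
  simp [mul_comm]

end CommSemiring

theorem forall_dualDistrib₃_eq_zero_iff {K M N P : Type*} [Field K] [AddCommGroup M]
    [AddCommGroup N] [AddCommGroup P] [Module K M] [Module K N] [Module K P]
    (t : M ⊗[K] (N ⊗[K] P)) :
    (∀ f g h, dualDistrib₃ f g h t = 0) ↔ t = 0 := by
  refine ⟨fun ht => ?_, by rintro rfl; simp⟩
  let bM := Basis.ofVectorSpace K M
  let bN := Basis.ofVectorSpace K N
  let bP := Basis.ofVectorSpace K P
  refine ((bM.tensorProduct (bN.tensorProduct bP)).forall_coord_eq_zero_iff).mp fun ⟨i, j, k⟩ => ?_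
  rw [Basis.tensorProduct_coord, Basis.tensorProduct_coord]
  exact ht _ _ _

end TensorProduct

open Module TensorProduct

section DualProd

variable {F A : Type*} [Field F] [AddCommGroup A] [Module F A] (α : A →ₗ[F] A ⊗[F] A)

theorem dualProd_apply (a b : Dual F A) (x : A) :
    dualProd α a b x = dualDistrib F A A (a ⊗ₜ b) (α x) := by
  simp only [dualProd, LinearMap.comp_apply, LinearEquiv.coe_coe]
  induction α x using TensorProduct.induction_on with
  | zero => simp
  | tmul y z => simp
  | add s t hs ht => simp only [map_add, hs, ht]

theorem Jmap_eq (x : A) :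
    Jmap α x = TensorProduct.assoc F A A A (α.rTensor A (α x)) - α.lTensor A (α x)
      - leftComm F A A A (TensorProduct.assoc F A A A (α.rTensor A (α x)))
      + leftComm F A A A (α.lTensor A (α x)) := by
  have : (TensorProduct.assoc F A A A).toLinearMap
      ∘ₗ (TensorProduct.comm F A A).toLinearMap.rTensor A
      ∘ₗ (TensorProduct.assoc F A A A).symm.toLinearMap = leftComm F A A A := by
    ext; rfl
  simp only [Jmap, this, LinearEquiv.coe_coe]

theorem dualDistrib₃_assoc_rTensor (a b c : Dual F A) (s : A ⊗[F] A) :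
    dualDistrib₃ a b c (TensorProduct.assoc F A A A (α.rTensor A s))
      = dualDistrib F A A (dualProd α a b ⊗ₜ c) s := by
  induction s using TensorProduct.induction_on with
  | zero => simp
  | tmul y z => simp [dualDistrib₃_assoc_tmul, dualProd_apply]
  | add s t hs ht => simp only [map_add, hs, ht]

theorem dualDistrib₃_lTensor (a b c : Dual F A) (s : A ⊗[F] A) :
    dualDistrib₃ a b c (α.lTensor A s) = dualDistrib F A A (a ⊗ₜ dualProd α b c) s := by
  induction s using TensorProduct.induction_on with
  | zero => simp
  | tmul y z => simp [dualDistrib₃_tmul, dualProd_apply]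
  | add s t hs ht => simp only [map_add, hs, ht]

theorem dualDistrib₃_Jmap (a b c : Dual F A) (x : A) :
    dualDistrib₃ a b c (Jmap α x)
      = (dualProd α (dualProd α a b) c - dualProd α a (dualProd α b c)
        - (dualProd α (dualProd α b a) c - dualProd α b (dualProd α a c))) x := by
  simp only [Jmap_eq, map_sub, map_add, dualDistrib₃_leftComm,
    dualDistrib₃_assoc_rTensor, dualDistrib₃_lTensor, ← dualProd_apply, LinearMap.sub_apply]
  ring

end DualProd

theorem dual_lsym_iff_J_eq_zero (α : A →ₗ[F] A ⊗[F] A) :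
    (∀ a b c : Module.Dual F A,
      dualProd α (dualProd α a b) c - dualProd α a (dualProd α b c)
      = dualProd α (dualProd α b a) c - dualProd α b (dualProd α a c))
    ↔ (∀ x : A, Jmap α x = 0) := by
  calc _ ↔ ∀ a b c : Dual F A, ∀ x, dualDistrib₃ a b c (Jmap α x) = 0 := by
        simp only [dualDistrib₃_Jmap, ← sub_eq_zero (a := dualProd α (dualProd α _ _) _ - _),
          LinearMap.ext_iff, LinearMap.zero_apply]
    _ ↔ ∀ x, ∀ a b c : Dual F A, dualDistrib₃ a b c (Jmap α x) = 0 :=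
        ⟨fun h x a b c => h a b c x, fun h a b c x => h x a b c⟩
    _ ↔ ∀ x : A, Jmap α x = 0 := forall_congr' fun x => forall_dualDistrib₃_eq_zero_iff _
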